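/- (Gowers–Cauchy–Schwarz inequality for the Gowers uniformity norms.) Let Z be a finite additive group, let s ≥ 2 be an integer, and let ⟨f_ω : ω ∈ {0,1}^s⟩ be a family of real-valued functions on Z. Then |𝔼[∏_{ω∈{0,1}^s} f_ω(x + ω·h) | x ∈ Z, h ∈ Z^s]| ≤ ∏_{ω∈{0,1}^s} ‖f_ω‖_{U^s(Z)}. -/

import Mathlib

open Finset

/-- The average of a real-valued function on a finite type. -/
noncomputable def avg (α : Type*) [Fintype α] (f : α → ℝ) : ℝ :=
  (∑ x, f x) / (Fintype.card α : ℝ)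

/-- The Gowers uniformity norm `‖f‖_{U^s(Z)}` of `f : Z → ℝ`. -/
noncomputable def gowersNorm (Z : Type*) [AddCommGroup Z] [Fintype Z] (s : ℕ) (f : Z → ℝ) : ℝ :=
  (avg (Z × (Fin s → Z)) fun xh =>
      ∏ ω : Fin s → Bool, f (xh.1 + ∑ i, if ω i then xh.2 i else 0)) ^ (((2 : ℝ) ^ s)⁻¹)

/-- The weak uniformity norm `‖f‖_{w^s(Z)}` of `f : Z → ℝ`. -/
noncomputable def weakNorm (Z : Type*) [AddCommGroup Z] [Fintype Z] (s : ℕ) (f : Z → ℝ) : ℝ :=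
  sSup {r : ℝ | ∃ h : (Fin s → Bool) → Z → ℝ,
    (∀ ω x, h ω x ∈ Set.Icc (-1 : ℝ) 1) ∧
    r = avg (Z × (Fin s → Z)) fun xh =>
      f xh.1 * ∏ ω ∈ Finset.univ.filter (fun ω : Fin s → Bool => ω ≠ fun _ => false),
        h ω (xh.1 + ∑ i, if ω i then xh.2 i else 0)}

/-!
Split the cube `{0,1}^s` along a coordinate `i` into the faces `ω i = 0` and `ω i = 1`. Averaging
first over `x` and over the difference `h i`, the cube average becomes an average over the
remaining `h` of a product of two face averages, so by Cauchy–Schwarz its square is at most the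
product of the cube averages of the two families obtained by copying one face onto the other.
Doing this in every direction replaces the `2^s` functions by `2^s` constant families, whose cube
averages are the `2^s`-th powers of the Gowers norms.
-/

open Function
open scoped BigOperators

lemma Finset.piecewise_insert_update {ι β : Type*} [DecidableEq ι] {S : Finset ι} {i : ι}
    (hi : i ∉ S) (ε ω : ι → β) (b : β) :
    (insert i S).piecewise (update ε i b) ω = S.piecewise ε (update ω i b) := by
  ext j
  rcases eq_or_ne j i with rfl | hj
  · simp [hi]
  · by_cases hjS : j ∈ S <;> simp [hj, hjS]

namespace Gowers

variable {ι Z : Type*} [Fintype ι] [DecidableEq ι] [AddCommGroup Z]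

def cubeDot (ω : ι → Bool) (h : ι → Z) : Z := ∑ j, if ω j then h j else 0

lemma cubeDot_update_of_eq_false {ω : ι → Bool} {i : ι} (hω : ω i = false) (h : ι → Z) (c : Z) :
    cubeDot ω (update h i c) = cubeDot ω h := by
  refine sum_congr rfl fun j _ => ?_
  rcases eq_or_ne j i with rfl | hj
  · simp [hω]
  · rw [update_of_ne hj]

lemma cubeDot_eq_add_of_eq_true {ω : ι → Bool} {i : ι} (hω : ω i = true) (h : ι → Z) :
    cubeDot ω h = h i + cubeDot (update ω i false) h := by
  rw [cubeDot, cubeDot, ← add_sum_erase _ _ (mem_univ i), ← add_sum_erase _ _ (mem_univ i)]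
  simp only [hω, update_self, Bool.false_eq_true, if_true, if_false, zero_add]
  refine congrArg _ (sum_congr rfl fun j hj => ?_)
  rw [update_of_ne (ne_of_mem_erase hj)]

def face (i : ι) (b : Bool) : Finset (ι → Bool) := univ.filter (· i = b)

lemma prod_eq_prod_face_false_mul {M : Type*} [CommMonoid M] (i : ι) (G : (ι → Bool) → M) :
    ∏ ω, G ω = (∏ ω ∈ face i false, G ω) * ∏ ω ∈ face i true, G ω := by
  rw [← prod_filter_mul_prod_filter_not univ (· i = false)]
  simp only [face, Bool.not_eq_false]

lemma prod_face_update {M : Type*} [CommMonoid M] (i : ι) (b b' : Bool) (G : (ι → Bool) → M) :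
    ∏ ω ∈ face i b, G (update ω i b') = ∏ ω ∈ face i b', G ω := by
  refine prod_nbij' (update · i b') (update · i b) ?_ ?_ ?_ ?_ fun _ _ => rfl <;>
    intro ω hω <;> simp only [face, mem_filter, mem_univ, true_and] at hω ⊢
  · exact update_self ..
  · exact update_self ..
  · rw [update_idem, ← hω, update_eq_self]
  · rw [update_idem, ← hω, update_eq_self]

lemma prod_update_false_mul_update_true {M : Type*} [CommMonoid M] (i : ι) (a : (ι → Bool) → M) :
    ∏ ε, a (update ε i false) * a (update ε i true) = ∏ ε, a ε ^ 2 := by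
  have flip : Involutive fun ε : ι → Bool => update ε i (!ε i) := fun ε => by simp
  have pair : ∀ ε, a (update ε i false) * a (update ε i true) = a ε * a (update ε i (!ε i)) := by
    intro ε
    cases hε : ε i
    · rw [← hε, update_eq_self, hε]; rfl
    · rw [← hε, update_eq_self, hε, mul_comm]; rfl
  simp_rw [pair]
  rw [prod_mul_distrib, prod_pow, sq]
  congr 1
  exact Fintype.prod_bijective _ flip.bijective _ _ fun _ => rfl

variable [Fintype Z]

lemma expect_expect_update {M : Type*} [AddCommMonoid M] [Module ℚ≥0 M] (i : ι)
    (g : (ι → Z) → M) : 𝔼 h, 𝔼 c, g (update h i c) = 𝔼 h, g h := by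
  have swap : Involutive fun p : (ι → Z) × Z => (update p.1 i p.2, p.1 i) := fun p => by simp
  calc 𝔼 h, 𝔼 c, g (update h i c) = 𝔼 p : (ι → Z) × Z, g (update p.1 i p.2) := by
        rw [← univ_product_univ, expect_product]
    _ = 𝔼 p : (ι → Z) × Z, g p.1 := Fintype.expect_bijective _ swap.bijective _ _ fun _ => rfl
    _ = 𝔼 h, g h := by rw [← univ_product_univ, expect_product]; simp only [Fintype.expect_const]

/-- Since `Φ` ignores `h i`, the free coordinate `h i` can serve as the difference `y - x`. -/
lemma expect_expect_expect_eq_expect_expect_add {M : Type*} [AddCommMonoid M] [Module ℚ≥0 M] (i : ι)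
    (Φ : (ι → Z) → Z → Z → M) (hΦ : ∀ h c, Φ (update h i c) = Φ h) :
    𝔼 h, 𝔼 x, 𝔼 y, Φ h x y = 𝔼 h, 𝔼 x, Φ h x (x + h i) := by
  calc 𝔼 h, 𝔼 x, 𝔼 y, Φ h x y = 𝔼 h, 𝔼 c, 𝔼 x, Φ (update h i c) x (x + update h i c i) := by
        simp only [hΦ, update_self]
        refine expect_congr rfl fun h _ =>
          (expect_congr rfl fun x _ => ?_).trans (expect_comm _ _ _)
        exact Fintype.expect_equiv (Equiv.addLeft x).symm _ _ fun y => by simp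
    _ = 𝔼 h, 𝔼 x, Φ h x (x + h i) := expect_expect_update i fun h => 𝔼 x, Φ h x (x + h i)

noncomputable def gowersInner (F : (ι → Bool) → Z → ℝ) : ℝ := 𝔼 h, 𝔼 x, ∏ ω, F ω (x + cubeDot ω h)

/-- `update ω i false` drops the `i`-th coordinate, so `faceAvg F i b h` does not depend on
`h i`. -/
noncomputable def faceAvg (F : (ι → Bool) → Z → ℝ) (i : ι) (b : Bool) (h : ι → Z) : ℝ :=
  𝔼 x, ∏ ω ∈ face i b, F ω (x + cubeDot (update ω i false) h)

lemma gowersInner_eq_expect_faceAvg_mul (F : (ι → Bool) → Z → ℝ) (i : ι) :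
    gowersInner F = 𝔼 h, faceAvg F i false h * faceAvg F i true h := by
  simp_rw [faceAvg, expect_mul_expect]
  rw [gowersInner, expect_expect_expect_eq_expect_expect_add i _ fun h c => ?invariant]
  case invariant =>
    ext x y
    simp only [cubeDot_update_of_eq_false (update_self ..)]
  refine expect_congr rfl fun h _ => expect_congr rfl fun x _ => ?_
  rw [prod_eq_prod_face_false_mul i]
  congr 1 <;> refine prod_congr rfl fun ω hω => ?_ <;>
    simp only [face, mem_filter, mem_univ, true_and] at hω
  · rw [← hω, update_eq_self]
  · rw [cubeDot_eq_add_of_eq_true hω, add_assoc]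

lemma faceAvg_comp_update (F : (ι → Bool) → Z → ℝ) (i : ι) (b b' : Bool) (h : ι → Z) :
    faceAvg (fun ω => F (update ω i b)) i b' h = faceAvg F i b h := by
  refine expect_congr rfl fun x _ => ?_
  simpa only [update_idem] using
    prod_face_update i b' b fun ω => F ω (x + cubeDot (update ω i false) h)

lemma gowersInner_comp_update (F : (ι → Bool) → Z → ℝ) (i : ι) (b : Bool) :
    gowersInner (fun ω => F (update ω i b)) = 𝔼 h, faceAvg F i b h ^ 2 := by
  simp only [gowersInner_eq_expect_faceAvg_mul _ i, faceAvg_comp_update, sq]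

lemma gowersInner_comp_update_nonneg (F : (ι → Bool) → Z → ℝ) (i : ι) (b : Bool) :
    0 ≤ gowersInner (fun ω => F (update ω i b)) := by
  rw [gowersInner_comp_update]
  positivity

lemma gowersInner_sq_le (F : (ι → Bool) → Z → ℝ) (i : ι) :
    gowersInner F ^ 2 ≤
      gowersInner (fun ω => F (update ω i false)) * gowersInner (fun ω => F (update ω i true)) := by
  rw [gowersInner_eq_expect_faceAvg_mul F i, gowersInner_comp_update, gowersInner_comp_update]
  exact expect_mul_sq_le_sq_mul_sq _ _ _

/-- The coordinates in `S` are frozen at the values of `ε`; each new direction costs one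
Cauchy–Schwarz. -/
lemma abs_gowersInner_pow_le_abs_prod (F : (ι → Bool) → Z → ℝ) (S : Finset ι) :
    |gowersInner F| ^ 2 ^ Fintype.card ι ≤
      |∏ ε, gowersInner fun ω => F (S.piecewise ε ω)| := by
  induction S using Finset.induction_on with
  | empty =>
    simp only [piecewise_empty, prod_const, card_univ, Fintype.card_fun, Fintype.card_bool,
      abs_pow, le_refl]
  | insert i S hi ih =>
    refine ih.trans (sq_le_sq.mp ?_)
    calc (∏ ε, gowersInner fun ω => F (S.piecewise ε ω)) ^ 2
        = ∏ ε, (gowersInner fun ω => F (S.piecewise ε ω)) ^ 2 := (prod_pow ..).symm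
      _ ≤ ∏ ε, (gowersInner fun ω => F ((insert i S).piecewise (update ε i false) ω)) *
            gowersInner fun ω => F ((insert i S).piecewise (update ε i true) ω) :=
        prod_le_prod (fun _ _ => sq_nonneg _) fun ε _ => by
          simpa only [piecewise_insert_update hi] using
            gowersInner_sq_le (fun ω => F (S.piecewise ε ω)) i
      _ = (∏ ε, gowersInner fun ω => F ((insert i S).piecewise ε ω)) ^ 2 := by
        rw [prod_update_false_mul_update_true i
          fun ε => gowersInner fun ω => F ((insert i S).piecewise ε ω), prod_pow]

lemma gowersInner_const_nonneg [Nonempty ι] (f : Z → ℝ) : 0 ≤ gowersInner fun _ : ι → Bool => f :=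
  gowersInner_comp_update_nonneg (fun _ => f) (Classical.arbitrary ι) false

lemma abs_gowersInner_pow_le_prod [Nonempty ι] (F : (ι → Bool) → Z → ℝ) :
    |gowersInner F| ^ 2 ^ Fintype.card ι ≤ ∏ ε, gowersInner fun _ : ι → Bool => F ε := by
  simpa only [piecewise_univ, abs_of_nonneg (prod_nonneg fun ε _ => gowersInner_const_nonneg (F ε))]
    using abs_gowersInner_pow_le_abs_prod F univ

lemma avg_eq_gowersInner (F : (ι → Bool) → Z → ℝ) :
    (avg (Z × (ι → Z)) fun xh => ∏ ω, F ω (xh.1 + ∑ i, if ω i then xh.2 i else 0)) =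
      gowersInner F := by
  rw [avg, ← card_univ, ← expect_eq_sum_div_card, ← univ_product_univ, expect_product, expect_comm]
  rfl

end Gowers

open Gowers

/-- The Gowers–Cauchy–Schwarz inequality for the Gowers uniformity norms. -/
theorem stmt15 (Z : Type) [AddCommGroup Z] [Fintype Z] (s : ℕ) (hs : 2 ≤ s)
    (f : (Fin s → Bool) → Z → ℝ) :
    |avg (Z × (Fin s → Z)) fun xh =>
        ∏ ω : Fin s → Bool, f ω (xh.1 + ∑ i, if ω i then xh.2 i else 0)|
      ≤ ∏ ω : Fin s → Bool, gowersNorm Z s (f ω) := by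
  have : Nonempty (Fin s) := ⟨⟨0, by omega⟩⟩
  have key := abs_gowersInner_pow_le_prod f
  rw [Fintype.card_fin, ← Real.rpow_natCast, Nat.cast_pow, Nat.cast_ofNat] at key
  simp only [gowersNorm, avg_eq_gowersInner]
  rw [Real.finsetProd_rpow _ _ fun ω _ => gowersInner_const_nonneg (f ω),
    Real.le_rpow_inv_iff_of_pos (abs_nonneg _)
      (prod_nonneg fun ω _ => gowersInner_const_nonneg (f ω)) (by positivity)]
  exact key
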